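/- Let A, Q be n×n real matrices and B₀, Δ_B n×m real matrices; let R be an m×m real matrix. Assume: Q and R are symmetric positive definite with Q − q·I_n ⪰ 0 and R − r·I_m ⪰ 0 for reals q, r > 0; ‖Δ_B‖ ≤ ε for a real ε ≥ 0; P₀ is a symmetric positive definite n×n matrix satisfying Aᵀ P₀ + P₀ A + Q − P₀ B₀ R⁻¹ B₀ᵀ P₀ = 0; K₀ := −R⁻¹ B₀ᵀ P₀; and W₀ is a symmetric positive semidefinite n×n matrix satisfying (A + B₀ K₀) W₀ + W₀ (A + B₀ K₀)ᵀ + I_n = 0. Then ‖Δ_B K₀ W₀ + W₀ K₀ᵀ Δ_Bᵀ‖ ≤ 2ε·tr(P₀)/√(q·r). -/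

import Mathlib

open Matrix
open scoped Matrix.Norms.L2Operator

/-!
The Riccati equation turns into the closed-loop Lyapunov equation
`A_cᵀ P₀ + P₀ A_c + (Q + K₀ᵀ R K₀) = 0` with `A_c = A + B₀ K₀`. Pairing it with the Lyapunov
equation `A_c W₀ + W₀ A_cᵀ + 1 = 0` under the trace gives `tr (Q W₀) + tr (R K₀ W₀ K₀ᵀ) = tr P₀`,
so `q tr W₀ + r tr (K₀ W₀ K₀ᵀ) ≤ tr P₀`. Factoring `W₀ = S S` through its square root,
`‖K₀ W₀‖² ≤ ‖K₀ W₀ K₀ᵀ‖ ‖W₀‖`, and the operator norm of a positive semidefinite matrix is at most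
its trace; hence `‖K₀ W₀‖ ≤ tr P₀ / √(q r)`. The perturbation term is `X + Xᵀ` with
`X = Δ_B K₀ W₀`.
-/

namespace Matrix

variable {ι κ : Type*} [Fintype ι] [DecidableEq ι] [Fintype κ] [DecidableEq κ]

open scoped MatrixOrder in
theorem PosSemidef.trace_mul_nonneg {M W : Matrix ι ι ℝ} (hM : M.PosSemidef)
    (hW : W.PosSemidef) : 0 ≤ (M * W).trace := by
  obtain ⟨S, rfl⟩ : ∃ S : Matrix ι ι ℝ, W = Sᴴ * S :=
    ⟨CFC.sqrt W, by rw [(CFC.sqrt_nonneg W).posSemidef.1.eq, CFC.sqrt_mul_sqrt_self W hW.nonneg]⟩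
  rw [← Matrix.mul_assoc, trace_mul_comm, ← Matrix.mul_assoc]
  exact (hM.mul_mul_conjTranspose_same S).trace_nonneg

theorem PosSemidef.mul_trace_le_trace_mul {M W : Matrix ι ι ℝ} {c : ℝ}
    (hM : (M - c • 1).PosSemidef) (hW : W.PosSemidef) : c * W.trace ≤ (M * W).trace := by
  have := hM.trace_mul_nonneg hW
  rwa [Matrix.sub_mul, trace_sub, smul_mul, Matrix.one_mul, trace_smul, smul_eq_mul,
    sub_nonneg] at this

theorem PosSemidef.l2_opNorm_le_trace {M : Matrix ι ι ℝ} (hM : M.PosSemidef) :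
    ‖M‖ ≤ M.trace := by
  have hdiag : ‖M‖ = ‖diagonal hM.1.eigenvalues‖ := by
    conv_lhs => rw [hM.1.spectral_theorem, Unitary.conjStarAlgAut_apply, Matrix.mul_assoc,
      CStarRing.norm_coe_unitary_mul, ← Unitary.coe_star, CStarRing.norm_mul_coe_unitary]
    simp
  rw [hdiag, l2_opNorm_diagonal, hM.1.trace_eq_sum_eigenvalues]
  refine pi_norm_le_iff_of_nonneg (Finset.sum_nonneg fun i _ => hM.eigenvalues_nonneg i) |>.2
    fun i => ?_
  rw [Real.norm_of_nonneg (hM.eigenvalues_nonneg i)]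
  exact Finset.single_le_sum (fun j _ => hM.eigenvalues_nonneg j) (Finset.mem_univ i)

open scoped MatrixOrder ComplexOrder in
theorem l2_opNorm_mul_sq_le {𝕜 : Type*} [RCLike 𝕜] {K : Matrix κ ι 𝕜} {W : Matrix ι ι 𝕜}
    (hW : W.PosSemidef) : ‖K * W‖ ^ 2 ≤ ‖K * W * Kᴴ‖ * ‖W‖ := by
  set S := CFC.sqrt W
  have hS : Sᴴ = S := (CFC.sqrt_nonneg W).posSemidef.1.eq
  have hSS : S * S = W := CFC.sqrt_mul_sqrt_self W hW.nonneg
  have hKS : ‖K * S‖ * ‖K * S‖ = ‖K * W * Kᴴ‖ := by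
    have : K * S * (K * S)ᴴ = K * W * Kᴴ := by
      rw [conjTranspose_mul, hS, ← hSS]; simp only [Matrix.mul_assoc]
    rw [← l2_opNorm_conjTranspose (K * S), ← l2_opNorm_conjTranspose_mul_self,
      conjTranspose_conjTranspose, this]
  have hS' : ‖S‖ * ‖S‖ = ‖W‖ := by
    rw [← l2_opNorm_conjTranspose_mul_self, hS, hSS]
  calc ‖K * W‖ ^ 2 = ‖K * S * S‖ ^ 2 := by rw [Matrix.mul_assoc, hSS]
    _ ≤ (‖K * S‖ * ‖S‖) ^ 2 := by gcongr; exact l2_opNorm_mul _ _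
    _ = ‖K * W * Kᴴ‖ * ‖W‖ := by rw [← hKS, ← hS']; ring

theorem l2_opNorm_transpose (A : Matrix κ ι ℝ) : ‖Aᵀ‖ = ‖A‖ := by
  rw [← conjTranspose_eq_transpose_of_trivial, l2_opNorm_conjTranspose]

theorem l2_opNorm_mul_le_of_trace_le {K : Matrix κ ι ℝ} {W : Matrix ι ι ℝ}
    (hW : W.PosSemidef) {q r t : ℝ} (hq : 0 < q) (hr : 0 < r)
    (h : q * W.trace + r * (K * W * Kᵀ).trace ≤ t) : ‖K * W‖ ≤ t / √(q * r) := by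
  have hKWK : (K * W * Kᵀ).PosSemidef := by
    simpa using hW.mul_mul_conjTranspose_same K
  have hqa : 0 ≤ q * W.trace := mul_nonneg hq.le hW.trace_nonneg
  have hrb : 0 ≤ r * (K * W * Kᵀ).trace := mul_nonneg hr.le hKWK.trace_nonneg
  have hWt : W.trace ≤ t / q := by rw [le_div_iff₀' hq]; linarith
  have hKWKt : (K * W * Kᵀ).trace ≤ t / r := by rw [le_div_iff₀' hr]; linarith
  have ht : 0 ≤ t := by linarith
  rw [← pow_le_pow_iff_left₀ (norm_nonneg _) (by positivity) two_ne_zero]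
  calc ‖K * W‖ ^ 2 ≤ ‖K * W * Kᵀ‖ * ‖W‖ := by
        simpa using l2_opNorm_mul_sq_le (K := K) hW
    _ ≤ (t / r) * (t / q) := by
        gcongr
        · exact hKWK.l2_opNorm_le_trace.trans hKWKt
        · exact hW.l2_opNorm_le_trace.trans hWt
    _ = (t / √(q * r)) ^ 2 := by
        rw [div_pow, Real.sq_sqrt (by positivity)]; field_simp

end Matrix

section Lyapunov

variable {ι κ α : Type*} [Fintype ι] [Fintype κ] [DecidableEq κ] [CommRing α]

theorem closedLoop_lyapunov_of_riccati {A Q P : Matrix ι ι α} {B : Matrix ι κ α}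
    {R : Matrix κ κ α} {K : Matrix κ ι α} (hR : IsUnit R.det)
    (hARE : Aᵀ * P + P * A + Q - P * B * R⁻¹ * Bᵀ * P = 0) (hK : K = -(R⁻¹ * Bᵀ * P)) :
    (A + B * K)ᵀ * P + P * (A + B * K) + (Q + Kᵀ * R * K) = 0 := by
  have hRK : R * K = -(Bᵀ * P) := by
    rw [hK, Matrix.mul_neg, ← Matrix.mul_assoc, ← Matrix.mul_assoc, mul_nonsing_inv R hR,
      Matrix.one_mul]
  have hKRK : Kᵀ * R * K = -((B * K)ᵀ * P) := by
    rw [Matrix.mul_assoc, hRK, transpose_mul, Matrix.mul_neg, Matrix.mul_assoc]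
  have hPBK : P * (B * K) = -(P * B * R⁻¹ * Bᵀ * P) := by
    rw [hK]; simp only [Matrix.mul_neg, Matrix.mul_assoc]
  rw [hKRK, transpose_add, Matrix.add_mul, Matrix.mul_add, hPBK, ← hARE]
  abel

theorem trace_mul_eq_trace_of_lyapunov [DecidableEq ι] {Ac P M W : Matrix ι ι α}
    (hP : Acᵀ * P + P * Ac + M = 0) (hW : Ac * W + W * Acᵀ + 1 = 0) :
    (M * W).trace = P.trace :=
  calc (M * W).trace = -(P * (Ac * W + W * Acᵀ)).trace := by
        rw [← neg_eq_of_add_eq_zero_right hP, Matrix.mul_add, Matrix.neg_mul, Matrix.add_mul,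
          trace_neg, trace_add, trace_add, trace_mul_cycle' P W, add_comm]
        simp only [Matrix.mul_assoc]
    _ = P.trace := by rw [eq_neg_of_add_eq_zero_left hW]; simp

end Lyapunov

theorem perturbation_term_norm_bound_general {n m : ℕ}
    (A Q : Matrix (Fin n) (Fin n) ℝ)
    (B₀ ΔB : Matrix (Fin n) (Fin m) ℝ)
    (R : Matrix (Fin m) (Fin m) ℝ)
    (q r : ℝ) (hq : 0 < q) (hr : 0 < r)
    (hR : R.PosDef)
    (hQq : (Q - q • (1 : Matrix (Fin n) (Fin n) ℝ)).PosSemidef)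
    (hRr : (R - r • (1 : Matrix (Fin m) (Fin m) ℝ)).PosSemidef)
    (ε : ℝ) (hε : 0 ≤ ε) (hΔB : ‖ΔB‖ ≤ ε)
    (P₀ : Matrix (Fin n) (Fin n) ℝ)
    (hARE : Aᵀ * P₀ + P₀ * A + Q - P₀ * B₀ * R⁻¹ * B₀ᵀ * P₀ = 0)
    (K₀ : Matrix (Fin m) (Fin n) ℝ) (hK₀ : K₀ = -(R⁻¹ * B₀ᵀ * P₀))
    (W₀ : Matrix (Fin n) (Fin n) ℝ) (hW₀psd : W₀.PosSemidef)
    (hW₀ : (A + B₀ * K₀) * W₀ + W₀ * (A + B₀ * K₀)ᵀ + 1 = 0) :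
    ‖ΔB * K₀ * W₀ + W₀ * K₀ᵀ * ΔBᵀ‖ ≤ 2 * ε * P₀.trace / Real.sqrt (q * r) := by
  have hlyap := closedLoop_lyapunov_of_riccati (isUnit_iff_ne_zero.2 hR.det_pos.ne') hARE hK₀
  have hcost : (Q * W₀).trace + (R * (K₀ * W₀ * K₀ᵀ)).trace = P₀.trace := by
    rw [← trace_mul_eq_trace_of_lyapunov hlyap hW₀, Matrix.add_mul, trace_add,
      Matrix.mul_assoc (K₀ᵀ * R), trace_mul_comm (K₀ᵀ * R), trace_mul_comm R]
    simp only [Matrix.mul_assoc]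
  have hKWK : (K₀ * W₀ * K₀ᵀ).PosSemidef := by
    simpa using hW₀psd.mul_mul_conjTranspose_same K₀
  have hKW : ‖K₀ * W₀‖ ≤ P₀.trace / √(q * r) :=
    l2_opNorm_mul_le_of_trace_le hW₀psd hq hr <| by
      linarith [hQq.mul_trace_le_trace_mul hW₀psd, hRr.mul_trace_le_trace_mul hKWK]
  have hsymm : W₀ * K₀ᵀ * ΔBᵀ = (ΔB * K₀ * W₀)ᵀ := by
    rw [transpose_mul, transpose_mul, (isHermitian_iff_isSymm.1 hW₀psd.1).eq, Matrix.mul_assoc]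
  calc ‖ΔB * K₀ * W₀ + W₀ * K₀ᵀ * ΔBᵀ‖ ≤ ‖ΔB * K₀ * W₀‖ + ‖(ΔB * K₀ * W₀)ᵀ‖ := by
        rw [hsymm]; exact norm_add_le _ _
    _ = 2 * ‖ΔB * (K₀ * W₀)‖ := by rw [l2_opNorm_transpose, Matrix.mul_assoc, two_mul]
    _ ≤ 2 * (ε * (P₀.trace / √(q * r))) := by
        gcongr
        exact (l2_opNorm_mul _ _).trans (mul_le_mul hΔB hKW (norm_nonneg _) hε)
    _ = 2 * ε * P₀.trace / Real.sqrt (q * r) := by ring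

/-- Perturbation bound in the proof of Proposition 1:
`‖Δ_B K₀ W₀ + W₀ K₀ᵀ Δ_Bᵀ‖ ≤ 2 ε tr(P₀)/√(q r)`. -/
theorem perturbation_term_norm_bound {n m : ℕ}
    (A Q : Matrix (Fin n) (Fin n) ℝ)
    (B₀ ΔB : Matrix (Fin n) (Fin m) ℝ)
    (R : Matrix (Fin m) (Fin m) ℝ)
    (q r : ℝ) (hq : 0 < q) (hr : 0 < r)
    (hQ : Q.PosDef) (hR : R.PosDef)
    (hQq : (Q - q • (1 : Matrix (Fin n) (Fin n) ℝ)).PosSemidef)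
    (hRr : (R - r • (1 : Matrix (Fin m) (Fin m) ℝ)).PosSemidef)
    (ε : ℝ) (hε : 0 ≤ ε) (hΔB : ‖ΔB‖ ≤ ε)
    (P₀ : Matrix (Fin n) (Fin n) ℝ) (hP₀ : P₀.PosDef)
    (hARE : Aᵀ * P₀ + P₀ * A + Q - P₀ * B₀ * R⁻¹ * B₀ᵀ * P₀ = 0)
    (K₀ : Matrix (Fin m) (Fin n) ℝ) (hK₀ : K₀ = -(R⁻¹ * B₀ᵀ * P₀))
    (W₀ : Matrix (Fin n) (Fin n) ℝ) (hW₀psd : W₀.PosSemidef)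
    (hW₀ : (A + B₀ * K₀) * W₀ + W₀ * (A + B₀ * K₀)ᵀ + 1 = 0) :
    ‖ΔB * K₀ * W₀ + W₀ * K₀ᵀ * ΔBᵀ‖ ≤ 2 * ε * P₀.trace / Real.sqrt (q * r) :=
  perturbation_term_norm_bound_general A Q B₀ ΔB R q r hq hr hR hQq hRr ε hε hΔB P₀ hARE K₀ hK₀ W₀
    hW₀psd hW₀
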